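/- Let s < e be real numbers, let q_e > 0, let ε > 0, and let N ≥ 1 be a natural number. Define the linear supply function q(t) = q_e · (t − s)/(e − s), and for 1 ≤ l ≤ N define L_l = [s + (e − s)/(1+ε)^{N−l+1}, s + (e − s)/(1+ε)^{N−l}]. Then for every 1 ≤ l ≤ N and every t ∈ L_l, q_e/(1+ε)^{N−l} ≤ (1+ε) · q(t). In other words, replacing the time-varying supply on the subinterval L_l by the constant value q_e/(1+ε)^{N−l} (the maximum of q over L_l) overestimates the true supply at any time of L_l by at most a multiplicative factor 1 + ε. -/
import Mathlib


/-- Replacing the time-varying supply `q(t) = q_e (t-s)/(e-s)` on the geometric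
subinterval `L_l = [s + (e-s)/(1+ε)^(N-l+1), s + (e-s)/(1+ε)^(N-l)]` by its
maximum `q_e/(1+ε)^(N-l)` overestimates the true supply at any time of `L_l`
by at most a multiplicative factor `1 + ε`. -/
theorem constant_supply_overestimate (s e qe ε : ℝ) (hse : s < e) (hqe : 0 < qe)
    (hε : 0 < ε) (N : ℕ) (hN : 1 ≤ N)
    (q : ℝ → ℝ) (hq : ∀ t, q t = qe * (t - s) / (e - s))
    (L : ℕ → Set ℝ)
    (hL : ∀ l, L l = Set.Icc (s + (e - s) / (1 + ε) ^ (N - l + 1))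
        (s + (e - s) / (1 + ε) ^ (N - l))) :
    ∀ l, 1 ≤ l → l ≤ N → ∀ t ∈ L l,
      qe / (1 + ε) ^ (N - l) ≤ (1 + ε) * q t := by
  intro l _ _ t ht
  rw [hL] at ht
  obtain ⟨ht1, _⟩ := ht
  have hes : (0:ℝ) < e - s := by linarith
  have h1ε : (0:ℝ) < 1 + ε := by linarith
  have hpow : (0:ℝ) < (1 + ε) ^ (N - l) := pow_pos h1ε _
  have hpow1 : (0:ℝ) < (1 + ε) ^ (N - l + 1) := pow_pos h1ε _
  -- from ht1: t - s ≥ (e-s)/(1+ε)^(N-l+1)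
  have hts : (e - s) / (1 + ε) ^ (N - l + 1) ≤ t - s := by linarith
  rw [hq]
  have key : qe / (1 + ε) ^ (N - l + 1) ≤ qe * (t - s) / (e - s) := by
    rw [div_le_div_iff₀ hpow1 hes]
    have : qe * ((e - s) / (1 + ε) ^ (N - l + 1)) ≤ qe * (t - s) :=
      mul_le_mul_of_nonneg_left hts hqe.le
    calc qe * (e - s) = qe * ((e - s) / (1 + ε) ^ (N - l + 1)) * (1 + ε) ^ (N - l + 1) := by
          field_simp
      _ ≤ qe * (t - s) * (1 + ε) ^ (N - l + 1) :=
          mul_le_mul_of_nonneg_right this hpow1.le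
  have : qe / (1 + ε) ^ (N - l) = (1 + ε) * (qe / (1 + ε) ^ (N - l + 1)) := by
    rw [pow_succ]; field_simp
  rw [this]
  exact mul_le_mul_of_nonneg_left key h1ε.le
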